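/- arXiv:1503.01936 — 7 statements merged into one kernel-verified Lean document; each statement's English description precedes it below -/
import Mathlib

section
/- Let P̲ be a C-convex (centered convex) lower probability on a set S of conditional events containing A|B and C|D. If A|B ≤_GN C|D, then P̲(A|B) ≤ P̲(C|D). -/
open Set

/-- Real-valued indicator function of a set. -/
noncomputable def ind {Ω : Type*} (B : Set Ω) : Ω → ℝ := B.indicator 1

/-- A bounded gamble. -/
def Bdd {Ω : Type*} (X : Ω → ℝ) : Prop := BddAbove (Set.range X) ∧ BddBelow (Set.range X)

/-- `S` is a set of conditional gambles: each pair has nonempty conditioning event and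
bounded gamble. -/
def IsCondGambleSet {Ω : Type*} (S : Set ((Ω → ℝ) × Set Ω)) : Prop :=
  ∀ p ∈ S, p.2.Nonempty ∧ Bdd p.1

/-- `S` is a set of conditional events: each member is an indicator gamble conditional on a
nonempty event. -/
def IsCondEventSet {Ω : Type*} (S : Set ((Ω → ℝ) × Set Ω)) : Prop :=
  ∀ p ∈ S, ∃ A B : Set Ω, B.Nonempty ∧ p = (ind A, B)

/-- The term `1_B · (X − P(X|B))` appearing in betting gains. -/
noncomputable def gainTerm {Ω : Type*} (P : (Ω → ℝ) × Set Ω → ℝ) (X : Ω → ℝ) (B : Set Ω) :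
    Ω → ℝ :=
  B.indicator (fun ω => X ω - P (X, B))

/-- Convex conditional lower prevision on `S`. -/
def IsConvexLP {Ω : Type*} (S : Set ((Ω → ℝ) × Set Ω)) (P : (Ω → ℝ) × Set Ω → ℝ) : Prop :=
  ∀ n : ℕ, 1 ≤ n → ∀ (X0 : Ω → ℝ) (B0 : Set Ω) (X : Fin n → Ω → ℝ) (Bs : Fin n → Set Ω)
    (s0 : ℝ) (s : Fin n → ℝ),
    (X0, B0) ∈ S → (∀ i, (X i, Bs i) ∈ S) → (∀ i, 0 ≤ s i) → (∑ i, s i) = s0 → 0 < s0 →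
    0 ≤ sSup ((fun ω => (∑ i, s i * gainTerm P (X i) (Bs i) ω) - s0 * gainTerm P X0 B0 ω)
        '' (B0 ∪ ⋃ i, Bs i))

/-- Centered convex (C-convex) conditional lower prevision on `S`. -/
def IsCConvexLP {Ω : Type*} (S : Set ((Ω → ℝ) × Set Ω)) (P : (Ω → ℝ) × Set Ω → ℝ) : Prop :=
  IsConvexLP S P ∧
    ∀ (X : Ω → ℝ) (B : Set Ω), (X, B) ∈ S →
      ((fun _ => (0 : ℝ)), B) ∈ S ∧ P ((fun _ => (0 : ℝ)), B) = 0

/-- 1-convex conditional lower prevision on `S`. -/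
def Is1ConvexLP {Ω : Type*} (S : Set ((Ω → ℝ) × Set Ω)) (P : (Ω → ℝ) × Set Ω → ℝ) : Prop :=
  ∀ (X0 X1 : Ω → ℝ) (B0 B1 : Set Ω) (t : ℝ),
    (X0, B0) ∈ S → (X1, B1) ∈ S → 0 < t →
    0 ≤ sSup ((fun ω => t * gainTerm P X1 B1 ω - t * gainTerm P X0 B0 ω) '' (B0 ∪ B1))

/-- Centered 1-convex conditional lower prevision on `S`. -/
def IsC1ConvexLP {Ω : Type*} (S : Set ((Ω → ℝ) × Set Ω)) (P : (Ω → ℝ) × Set Ω → ℝ) : Prop :=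
  Is1ConvexLP S P ∧
    ∀ (X : Ω → ℝ) (B : Set Ω), (X, B) ∈ S →
      ((fun _ => (0 : ℝ)), B) ∈ S ∧ P ((fun _ => (0 : ℝ)), B) = 0

/-- Williams-coherent conditional lower prevision on `S`. -/
def IsWCoherent {Ω : Type*} (S : Set ((Ω → ℝ) × Set Ω)) (P : (Ω → ℝ) × Set Ω → ℝ) : Prop :=
  ∀ (n : ℕ) (X0 : Ω → ℝ) (B0 : Set Ω) (X : Fin n → Ω → ℝ) (Bs : Fin n → Set Ω)
    (s0 : ℝ) (s : Fin n → ℝ),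
    (X0, B0) ∈ S → (∀ i, (X i, Bs i) ∈ S) → 0 ≤ s0 → (∀ i, 0 ≤ s i) →
    0 ≤ sSup ((fun ω => (∑ i, s i * gainTerm P (X i) (Bs i) ω) - s0 * gainTerm P X0 B0 ω)
        '' (B0 ∪ ⋃ i, Bs i))

/-- de Finetti-coherent conditional prevision on `S`. -/
def IsdFCoherent {Ω : Type*} (S : Set ((Ω → ℝ) × Set Ω)) (P : (Ω → ℝ) × Set Ω → ℝ) : Prop :=
  ∀ (n : ℕ), 1 ≤ n → ∀ (X : Fin n → Ω → ℝ) (Bs : Fin n → Set Ω) (s : Fin n → ℝ),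
    (∀ i, (X i, Bs i) ∈ S) →
    0 ≤ sSup ((fun ω => ∑ i, s i * gainTerm P (X i) (Bs i) ω) '' (⋃ i, Bs i))

/-- Goodman–Nguyen relation on conditional events: `A|B ≤GN C|D`. -/
def GNe {Ω : Type*} (A B C D : Set Ω) : Prop :=
  A ∩ B ⊆ C ∩ D ∧ Cᶜ ∩ D ⊆ Aᶜ ∩ B

/-- Goodman–Nguyen relation on conditional gambles: `X|B ≤GN Y|D`. -/
def GNg {Ω : Type*} (X : Ω → ℝ) (B : Set Ω) (Y : Ω → ℝ) (D : Set Ω) : Prop :=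
  ∀ ω : Ω, ind B ω * X ω + ind (Bᶜ ∩ D) ω * sSup (X '' B)
    ≤ ind D ω * Y ω + ind (B ∩ Dᶜ) ω * sInf (Y '' D)

/-- `pt` is a partition of `Ω`. -/
def IsPartition {Ω : Type*} (pt : Set (Set Ω)) : Prop :=
  (∀ e ∈ pt, e.Nonempty) ∧ (∀ e ∈ pt, ∀ f ∈ pt, e ≠ f → e ∩ f = ∅) ∧ ⋃₀ pt = Set.univ

/-- `E` is logically dependent on the partition `pt` (a union of its atoms). -/
def memA {Ω : Type*} (pt : Set (Set Ω)) (E : Set Ω) : Prop := ∃ T ⊆ pt, E = ⋃₀ T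

/-- Inner event `E_*` w.r.t. partition `pt`. -/
def innerE {Ω : Type*} (pt : Set (Set Ω)) (E : Set Ω) : Set Ω := ⋃₀ {e ∈ pt | e ⊆ E}

/-- Outer event `E^*` w.r.t. partition `pt`. -/
def outerE {Ω : Type*} (pt : Set (Set Ω)) (E : Set Ω) : Set Ω := ⋃₀ {e ∈ pt | (e ∩ E).Nonempty}

/-- `𝒜_C(pt)`, as a set of conditional (indicator) gambles. -/
def AC {Ω : Type*} (pt : Set (Set Ω)) : Set ((Ω → ℝ) × Set Ω) :=
  {p | ∃ A B : Set Ω, memA pt A ∧ memA pt B ∧ B.Nonempty ∧ p = (ind A, B)}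

/-- The inner conditional event `(C|D)_*`, as a conditional indicator gamble. -/
noncomputable def innerCE {Ω : Type*} (pt : Set (Set Ω)) (C D : Set Ω) : (Ω → ℝ) × Set Ω :=
  (ind (innerE pt (C ∩ D)), innerE pt (C ∩ D) ∪ outerE pt (Cᶜ ∩ D))

/-- The outer conditional event `(C|D)^*`, as a conditional indicator gamble. -/
noncomputable def outerCE {Ω : Type*} (pt : Set (Set Ω)) (C D : Set Ω) : (Ω → ℝ) × Set Ω :=
  (ind (outerE pt (C ∩ D)), outerE pt (C ∩ D) ∪ innerE pt (Cᶜ ∩ D))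



open Classical in
private lemma ind_apply {Ω : Type*} (A : Set Ω) (ω : Ω) :
    ind A ω = if ω ∈ A then 1 else 0 := by
  simp [ind, Set.indicator_apply]

open Classical in
private lemma gainTerm_apply {Ω : Type*} (P : (Ω → ℝ) × Set Ω → ℝ) (X : Ω → ℝ) (B : Set Ω)
    (ω : Ω) : gainTerm P X B ω = if ω ∈ B then X ω - P (X, B) else 0 := by
  simp [gainTerm, Set.indicator_apply]

private lemma convex_pair {Ω : Type*} {S : Set ((Ω → ℝ) × Set Ω)}
    {P : (Ω → ℝ) × Set Ω → ℝ} (hP : IsConvexLP S P)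
    (X0 X1 : Ω → ℝ) (B0 B1 : Set Ω) (h0 : (X0, B0) ∈ S) (h1 : (X1, B1) ∈ S) :
    0 ≤ sSup ((fun ω => gainTerm P X1 B1 ω - gainTerm P X0 B0 ω) '' (B0 ∪ B1)) := by
  have h := hP 1 le_rfl X0 B0 (fun _ => X1) (fun _ => B1) 1 (fun _ => 1) h0 (fun _ => h1)
    (fun _ => zero_le_one) (by simp) one_pos
  have e : (⋃ _ : Fin 1, B1) = B1 := Set.iUnion_const B1
  simp only [Fin.sum_univ_one, one_mul, e] at h
  exact h

private lemma gainTerm_zero {Ω : Type*} {S : Set ((Ω → ℝ) × Set Ω)}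
    {P : (Ω → ℝ) × Set Ω → ℝ} (hP : IsCConvexLP S P) {X : Ω → ℝ} {B : Set Ω}
    (hX : (X, B) ∈ S) (ω : Ω) : gainTerm P (fun _ => (0 : ℝ)) B ω = 0 := by
  have h0 := (hP.2 X B hX).2
  simp [gainTerm_apply, h0]

private lemma P_nonneg {Ω : Type*} {S : Set ((Ω → ℝ) × Set Ω)}
    {P : (Ω → ℝ) × Set Ω → ℝ} (hP : IsCConvexLP S P) {A B : Set Ω}
    (hB : B.Nonempty) (hAB : (ind A, B) ∈ S) : 0 ≤ P (ind A, B) := by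
  have h0S := (hP.2 (ind A) B hAB).1
  have h := convex_pair hP.1 (ind A) (fun _ => (0 : ℝ)) B B hAB h0S
  have hbd : ∀ x ∈ ((fun ω => gainTerm P (fun _ => (0 : ℝ)) B ω - gainTerm P (ind A) B ω)
      '' (B ∪ B)), x ≤ P (ind A, B) := by
    rintro x ⟨ω, hω, rfl⟩
    rw [Set.union_self] at hω
    simp only [gainTerm_zero hP hAB, gainTerm_apply, ind_apply, if_pos hω]
    split_ifs <;> linarith
  have hne : ((fun ω => gainTerm P (fun _ => (0 : ℝ)) B ω - gainTerm P (ind A) B ω)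
      '' (B ∪ B)).Nonempty :=
    ⟨_, Set.mem_image_of_mem _ (show hB.choose ∈ B ∪ B from Or.inl hB.choose_spec)⟩
  linarith [le_trans h (csSup_le hne hbd)]

private lemma P_le_one {Ω : Type*} {S : Set ((Ω → ℝ) × Set Ω)}
    {P : (Ω → ℝ) × Set Ω → ℝ} (hP : IsCConvexLP S P) {A B : Set Ω}
    (hB : B.Nonempty) (hAB : (ind A, B) ∈ S) : P (ind A, B) ≤ 1 := by
  have h0S := (hP.2 (ind A) B hAB).1
  have h := convex_pair hP.1 (fun _ => (0 : ℝ)) (ind A) B B h0S hAB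
  have hbd : ∀ x ∈ ((fun ω => gainTerm P (ind A) B ω - gainTerm P (fun _ => (0 : ℝ)) B ω)
      '' (B ∪ B)), x ≤ 1 - P (ind A, B) := by
    rintro x ⟨ω, hω, rfl⟩
    rw [Set.union_self] at hω
    simp only [gainTerm_zero hP hAB, gainTerm_apply, ind_apply, if_pos hω]
    split_ifs <;> linarith
  have hne : ((fun ω => gainTerm P (ind A) B ω - gainTerm P (fun _ => (0 : ℝ)) B ω)
      '' (B ∪ B)).Nonempty :=
    ⟨_, Set.mem_image_of_mem _ (show hB.choose ∈ B ∪ B from Or.inl hB.choose_spec)⟩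
  linarith [le_trans h (csSup_le hne hbd)]

/-- A C-convex lower probability on a set of conditional events agrees with the
Goodman–Nguyen relation. -/
theorem stmt_0 {Ω : Type*} [Nonempty Ω] (S : Set ((Ω → ℝ) × Set Ω))
    (P : (Ω → ℝ) × Set Ω → ℝ) (A B C D : Set Ω)
    (hB : B.Nonempty) (hD : D.Nonempty)
    (hS : IsCondEventSet S)
    (hAB : (ind A, B) ∈ S) (hCD : (ind C, D) ∈ S)
    (hP : IsCConvexLP S P)
    (hGN : GNe A B C D) :
    P (ind A, B) ≤ P (ind C, D) := by
  have hp0 : 0 ≤ P (ind A, B) := P_nonneg hP hB hAB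
  have hp1 : P (ind A, B) ≤ 1 := P_le_one hP hB hAB
  have hq0 : 0 ≤ P (ind C, D) := P_nonneg hP hD hCD
  have hq1 : P (ind C, D) ≤ 1 := P_le_one hP hD hCD
  have h := convex_pair hP.1 (ind C) (ind A) D B hCD hAB
  have hbd : ∀ x ∈ ((fun ω => gainTerm P (ind A) B ω - gainTerm P (ind C) D ω)
      '' (D ∪ B)), x ≤ P (ind C, D) - P (ind A, B) := by
    rintro x ⟨ω, hω, rfl⟩
    have h1 : ω ∈ A → ω ∈ B → ω ∈ C ∧ ω ∈ D := fun ha hb => hGN.1 ⟨ha, hb⟩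
    have h2 : ω ∉ C → ω ∈ D → ω ∉ A ∧ ω ∈ B := fun hc hd => hGN.2 ⟨hc, hd⟩
    simp only [gainTerm_apply, ind_apply]
    by_cases hωB : ω ∈ B <;> by_cases hωD : ω ∈ D <;>
      by_cases hωA : ω ∈ A <;> by_cases hωC : ω ∈ C <;>
      simp only [hωB, hωD, hωA, hωC, if_true, if_false, ite_true, ite_false] <;>
      first
        | linarith
        | (exact absurd ((h1 hωA hωB).1) hωC)
        | (exact absurd ((h1 hωA hωB).2) hωD)
        | (exact absurd ((h2 hωC hωD).2) hωB)
        | (exact absurd ((h2 hωC hωD).1) hωA)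
        | (exact absurd hω (by simp [hωB, hωD]))
  have hne : ((fun ω => gainTerm P (ind A) B ω - gainTerm P (ind C) D ω)
      '' (D ∪ B)).Nonempty :=
    ⟨_, Set.mem_image_of_mem _ (show hD.choose ∈ D ∪ B from Or.inl hD.choose_spec)⟩
  linarith [le_trans h (csSup_le hne hbd)]
end

section
/- Let P̲ be a C-convex (centered convex) lower prevision on a set S of conditional gambles containing X|B and Y|D. If X|B ≤_GN Y|D (Goodman–Nguyen relation for conditional gambles), then P̲(X|B) ≤ P̲(Y|D). -/
open Set

/-- A C-convex lower prevision on a set of conditional gambles agrees with the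
Goodman–Nguyen relation for conditional gambles. -/
theorem stmt_1 {Ω : Type*} [Nonempty Ω] (S : Set ((Ω → ℝ) × Set Ω))
    (P : (Ω → ℝ) × Set Ω → ℝ) (X Y : Ω → ℝ) (B D : Set Ω)
    (hB : B.Nonempty) (hD : D.Nonempty) (hX : Bdd X) (hY : Bdd Y)
    (hS : IsCondGambleSet S)
    (hXB : (X, B) ∈ S) (hYD : (Y, D) ∈ S)
    (hP : IsCConvexLP S P)
    (hGN : GNg X B Y D) :
    P (X, B) ≤ P (Y, D) := by
  obtain ⟨hconv, hcent⟩ := hP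
  obtain ⟨h0B, hP0B⟩ := hcent X B hXB
  obtain ⟨h0D, hP0D⟩ := hcent Y D hYD
  set a := sSup (X '' B) with ha
  set b := sInf (Y '' D) with hb
  have haX : BddAbove (X '' B) := hX.1.mono (image_subset_range X B)
  have hbY : BddBelow (Y '' D) := hY.2.mono (image_subset_range Y D)
  have indmem : ∀ (E : Set Ω) (ω : Ω), ω ∈ E → ind E ω = 1 := by
    intro E ω h; simp [ind, Set.indicator_of_mem h]
  have indnot : ∀ (E : Set Ω) (ω : Ω), ω ∉ E → ind E ω = 0 := by
    intro E ω h; simp [ind, Set.indicator_of_notMem h]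
  -- GN pointwise consequences
  have hBD : ∀ ω, ω ∈ B → ω ∈ D → X ω ≤ Y ω := by
    intro ω h1 h2
    have := hGN ω
    rw [indmem B ω h1, indmem D ω h2, indnot (Bᶜ ∩ D) ω (by simp [h1]),
      indnot (B ∩ Dᶜ) ω (by simp [h2])] at this
    linarith
  have hBnD : ∀ ω, ω ∈ B → ω ∉ D → X ω ≤ b := by
    intro ω h1 h2
    have := hGN ω
    rw [indmem B ω h1, indnot D ω h2, indnot (Bᶜ ∩ D) ω (by simp [h1]),
      indmem (B ∩ Dᶜ) ω ⟨h1, h2⟩] at this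
    linarith
  have hDnB : ∀ ω, ω ∈ D → ω ∉ B → a ≤ Y ω := by
    intro ω h1 h2
    have := hGN ω
    rw [indnot B ω h2, indmem D ω h1, indmem (Bᶜ ∩ D) ω ⟨h2, h1⟩,
      indnot (B ∩ Dᶜ) ω (by simp [h2])] at this
    linarith
  have g0B : ∀ ω, gainTerm P (fun _ => (0 : ℝ)) B ω = 0 := by
    intro ω
    simp [gainTerm, hP0B]
  have g0D : ∀ ω, gainTerm P (fun _ => (0 : ℝ)) D ω = 0 := by
    intro ω
    simp [gainTerm, hP0D]
  -- internality: P(X,B) ≤ a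
  have h1 : P (X, B) ≤ a := by
    have key := hconv 1 le_rfl (fun _ => (0 : ℝ)) B (fun _ => X) (fun _ => B) 1 (fun _ => 1)
      h0B (fun _ => hXB) (fun _ => zero_le_one) (by simp) one_pos
    have hbound : sSup ((fun ω => (∑ i : Fin 1, (fun _ : Fin 1 => (1:ℝ)) i *
        gainTerm P ((fun _ : Fin 1 => X) i) ((fun _ : Fin 1 => B) i) ω) -
        1 * gainTerm P (fun _ => (0:ℝ)) B ω) '' (B ∪ ⋃ _ : Fin 1, B)) ≤ a - P (X, B) := by
      apply csSup_le
      · obtain ⟨ω, hω⟩ := hB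
        exact ⟨_, ⟨ω, Or.inl hω, rfl⟩⟩
      · rintro x ⟨ω, hω, rfl⟩
        have hωB : ω ∈ B := by
          rcases hω with h | h
          · exact h
          · simpa using h
        simp only [Fin.sum_univ_one, one_mul, g0B, sub_zero]
        have : gainTerm P X B ω = X ω - P (X, B) := Set.indicator_of_mem hωB _
        rw [this]
        have : X ω ≤ a := le_csSup haX ⟨ω, hωB, rfl⟩
        linarith
    linarith [le_trans key hbound]
  -- internality: b ≤ P(Y,D)
  have h2 : b ≤ P (Y, D) := by
    have key := hconv 1 le_rfl Y D (fun _ => (fun _ => (0:ℝ))) (fun _ => D) 1 (fun _ => 1)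
      hYD (fun _ => h0D) (fun _ => zero_le_one) (by simp) one_pos
    have hbound : sSup ((fun ω => (∑ i : Fin 1, (fun _ : Fin 1 => (1:ℝ)) i *
        gainTerm P ((fun _ : Fin 1 => (fun _ => (0:ℝ))) i) ((fun _ : Fin 1 => D) i) ω) -
        1 * gainTerm P Y D ω) '' (D ∪ ⋃ _ : Fin 1, D)) ≤ P (Y, D) - b := by
      apply csSup_le
      · obtain ⟨ω, hω⟩ := hD
        exact ⟨_, ⟨ω, Or.inl hω, rfl⟩⟩
      · rintro x ⟨ω, hω, rfl⟩
        have hωD : ω ∈ D := by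
          rcases hω with h | h
          · exact h
          · simpa using h
        simp only [Fin.sum_univ_one, one_mul, g0D]
        have hg : gainTerm P Y D ω = Y ω - P (Y, D) := Set.indicator_of_mem hωD _
        rw [hg]
        have : b ≤ Y ω := csInf_le hbY ⟨ω, hωD, rfl⟩
        linarith
    linarith [le_trans key hbound]
  -- main application of convexity
  have key := hconv 1 le_rfl Y D (fun _ => X) (fun _ => B) 1 (fun _ => 1)
    hYD (fun _ => hXB) (fun _ => zero_le_one) (by simp) one_pos
  have hbound : sSup ((fun ω => (∑ i : Fin 1, (fun _ : Fin 1 => (1:ℝ)) i *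
      gainTerm P ((fun _ : Fin 1 => X) i) ((fun _ : Fin 1 => B) i) ω) -
      1 * gainTerm P Y D ω) '' (D ∪ ⋃ _ : Fin 1, B)) ≤ P (Y, D) - P (X, B) := by
    apply csSup_le
    · obtain ⟨ω, hω⟩ := hD
      exact ⟨_, ⟨ω, Or.inl hω, rfl⟩⟩
    · rintro x ⟨ω, hω, rfl⟩
      simp only [Fin.sum_univ_one, one_mul]
      by_cases hωB : ω ∈ B <;> by_cases hωD : ω ∈ D
      · rw [show gainTerm P X B ω = X ω - P (X, B) from Set.indicator_of_mem hωB _,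
          show gainTerm P Y D ω = Y ω - P (Y, D) from Set.indicator_of_mem hωD _]
        have := hBD ω hωB hωD
        linarith
      · rw [show gainTerm P X B ω = X ω - P (X, B) from Set.indicator_of_mem hωB _,
          show gainTerm P Y D ω = 0 from Set.indicator_of_notMem hωD _]
        have := hBnD ω hωB hωD
        linarith
      · rw [show gainTerm P X B ω = 0 from Set.indicator_of_notMem hωB _,
          show gainTerm P Y D ω = Y ω - P (Y, D) from Set.indicator_of_mem hωD _]
        have := hDnB ω hωD hωB
        linarith
      · exfalso
        rcases hω with h | h
        · exact hωD h
        · exact hωB (by simpa using h)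
  linarith [le_trans key hbound]
end

section
/- Let P̲ be a centered 1-convex lower prevision on a set S of conditional gambles containing X|B and Y|D. If X|B ≤_GN Y|D (Goodman–Nguyen relation for conditional gambles), then P̲(X|B) ≤ P̲(Y|D). -/
open Set

/-- A centered 1-convex lower prevision on a set of conditional gambles agrees
with the Goodman–Nguyen relation for conditional gambles. -/
theorem stmt_2 {Ω : Type*} [Nonempty Ω] (S : Set ((Ω → ℝ) × Set Ω))
    (P : (Ω → ℝ) × Set Ω → ℝ) (X Y : Ω → ℝ) (B D : Set Ω)
    (hB : B.Nonempty) (hD : D.Nonempty) (hX : Bdd X) (hY : Bdd Y)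
    (hS : IsCondGambleSet S)
    (hXB : (X, B) ∈ S) (hYD : (Y, D) ∈ S)
    (hP : IsC1ConvexLP S P)
    (hGN : GNg X B Y D) :
    P (X, B) ≤ P (Y, D) := by
  obtain ⟨hconv, hcent⟩ := hP
  obtain ⟨h0B, hP0B⟩ := hcent X B hXB
  obtain ⟨h0D, hP0D⟩ := hcent Y D hYD
  have hbXa : BddAbove (X '' B) := hX.1.mono (image_subset_range X B)
  have hbYb : BddBelow (Y '' D) := hY.2.mono (image_subset_range Y D)
  have hg0B : ∀ ω, gainTerm P (fun _ => (0:ℝ)) B ω = 0 := by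
    intro ω; simp [gainTerm, hP0B]
  have hg0D : ∀ ω, gainTerm P (fun _ => (0:ℝ)) D ω = 0 := by
    intro ω; simp [gainTerm, hP0D]
  have h1 : P (X, B) ≤ sSup (X '' B) := by
    have h := hconv (fun _ => 0) X B B 1 h0B hXB one_pos
    have hle : sSup ((fun ω => 1 * gainTerm P X B ω -
        1 * gainTerm P (fun _ => (0:ℝ)) B ω) '' (B ∪ B)) ≤ sSup (X '' B) - P (X, B) := by
      apply csSup_le ((hB.mono subset_union_left).image _)
      rintro x ⟨ω, hω, rfl⟩
      rw [union_self] at hω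
      simp only [hg0B, one_mul, mul_zero, sub_zero, gainTerm, indicator_of_mem hω]
      have : X ω ≤ sSup (X '' B) := le_csSup hbXa ⟨ω, hω, rfl⟩
      linarith
    linarith [le_trans h hle]
  have h2 : sInf (Y '' D) ≤ P (Y, D) := by
    have h := hconv Y (fun _ => 0) D D 1 hYD h0D one_pos
    have hle : sSup ((fun ω => 1 * gainTerm P (fun _ => (0:ℝ)) D ω -
        1 * gainTerm P Y D ω) '' (D ∪ D)) ≤ P (Y, D) - sInf (Y '' D) := by
      apply csSup_le ((hD.mono subset_union_left).image _)
      rintro x ⟨ω, hω, rfl⟩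
      rw [union_self] at hω
      simp only [hg0D, one_mul, mul_zero, zero_sub, gainTerm, indicator_of_mem hω]
      have : sInf (Y '' D) ≤ Y ω := csInf_le hbYb ⟨ω, hω, rfl⟩
      linarith
    linarith [le_trans h hle]
  have h := hconv Y X D B 1 hYD hXB one_pos
  have hle : sSup ((fun ω => 1 * gainTerm P X B ω - 1 * gainTerm P Y D ω) '' (D ∪ B)) ≤
      P (Y, D) - P (X, B) := by
    apply csSup_le ((hD.mono subset_union_left).image _)
    rintro x ⟨ω, hω, rfl⟩
    have hgn := hGN ω
    simp only [ind] at hgn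
    simp only [one_mul]
    by_cases hωB : ω ∈ B <;> by_cases hωD : ω ∈ D
    · have eB : B.indicator (1 : Ω → ℝ) ω = 1 := by
        rw [indicator_of_mem hωB]; rfl
      have eD : D.indicator (1 : Ω → ℝ) ω = 1 := by
        rw [indicator_of_mem hωD]; rfl
      have e1 : (Bᶜ ∩ D).indicator (1 : Ω → ℝ) ω = 0 :=
        indicator_of_notMem (by simp [hωB]) _
      have e2 : (B ∩ Dᶜ).indicator (1 : Ω → ℝ) ω = 0 :=
        indicator_of_notMem (by simp [hωD]) _
      rw [eB, eD, e1, e2] at hgn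
      simp only [gainTerm, indicator_of_mem hωB, indicator_of_mem hωD]
      linarith
    · have eB : B.indicator (1 : Ω → ℝ) ω = 1 := by
        rw [indicator_of_mem hωB]; rfl
      have eD : D.indicator (1 : Ω → ℝ) ω = 0 := indicator_of_notMem hωD _
      have e1 : (Bᶜ ∩ D).indicator (1 : Ω → ℝ) ω = 0 :=
        indicator_of_notMem (by simp [hωB]) _
      have e2 : (B ∩ Dᶜ).indicator (1 : Ω → ℝ) ω = 1 := by
        rw [indicator_of_mem (show ω ∈ B ∩ Dᶜ from ⟨hωB, hωD⟩)]; rfl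
      rw [eB, eD, e1, e2] at hgn
      simp only [gainTerm, indicator_of_mem hωB, indicator_of_notMem hωD]
      linarith
    · have eB : B.indicator (1 : Ω → ℝ) ω = 0 := indicator_of_notMem hωB _
      have eD : D.indicator (1 : Ω → ℝ) ω = 1 := by
        rw [indicator_of_mem hωD]; rfl
      have e1 : (Bᶜ ∩ D).indicator (1 : Ω → ℝ) ω = 1 := by
        rw [indicator_of_mem (show ω ∈ Bᶜ ∩ D from ⟨hωB, hωD⟩)]; rfl
      have e2 : (B ∩ Dᶜ).indicator (1 : Ω → ℝ) ω = 0 :=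
        indicator_of_notMem (by simp [hωB]) _
      rw [eB, eD, e1, e2] at hgn
      simp only [gainTerm, indicator_of_notMem hωB, indicator_of_mem hωD]
      linarith
    · exact absurd hω (by simp [hωB, hωD])
  linarith [le_trans h hle]
end

section
/- Let A|B and C|D be conditional events with A ∩ B ≠ ∅ and Cᶜ ∩ D ≠ ∅. Then A|B ≤_GN C|D (Goodman–Nguyen relation for conditional events) if and only if 1_A|B ≤_GN 1_C|D (Goodman–Nguyen relation for conditional gambles applied to the indicator gambles), i.e. if and only if for every ω ∈ Ω: 1_{A∩B}(ω) + 1_{Bᶜ∩D}(ω)·sup_B 1_A ≤ 1_{C∩D}(ω) + 1_{B∩Dᶜ}(ω)·inf_D 1_C. -/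
open Set

/-- For non-trivial conditional events, the Goodman–Nguyen relation on events is
equivalent to the Goodman–Nguyen relation on the corresponding indicator gambles. -/
theorem stmt_3 {Ω : Type*} [Nonempty Ω] (A B C D : Set Ω)
    (hB : B.Nonempty) (hD : D.Nonempty)
    (hAB : (A ∩ B).Nonempty) (hCD : (Cᶜ ∩ D).Nonempty) :
    GNe A B C D ↔ GNg (ind A) B (ind C) D := by
  classical
  have hind : ∀ (E : Set Ω) (ω : Ω), ind E ω = if ω ∈ E then 1 else 0 := by
    intro E ω; simp [ind, Set.indicator_apply]
  have hsup : sSup (ind A '' B) = 1 := by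
    apply IsGreatest.csSup_eq
    constructor
    · obtain ⟨ω, hA, hB'⟩ := hAB
      exact ⟨ω, hB', by simp [hind, hA]⟩
    · rintro x ⟨ω, hω, rfl⟩
      rw [hind]; split <;> norm_num
  have hinf : sInf (ind C '' D) = 0 := by
    apply IsLeast.csInf_eq
    constructor
    · obtain ⟨ω', hω'⟩ := hCD
      exact ⟨ω', hω'.2, by simp [hind, Set.mem_compl_iff _ _ |>.mp hω'.1]⟩
    · rintro x ⟨ω, hω, rfl⟩
      rw [hind]; split <;> norm_num
  constructor
  · rintro ⟨h1, h2⟩ ω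
    rw [hsup, hinf]
    by_cases hBω : ω ∈ B
    · have hnot : ω ∉ Bᶜ ∩ D := fun h => h.1 hBω
      by_cases hAω : ω ∈ A
      · have := h1 ⟨hAω, hBω⟩
        simp [hind, hBω, hAω, hnot, this.1, this.2]
      · simp only [hind, if_pos hBω, if_neg hAω, if_neg hnot]
        by_cases hDω : ω ∈ D <;> by_cases hCω : ω ∈ C <;> simp [hDω, hCω]
    · by_cases hDω : ω ∈ D
      · have hCω : ω ∈ C := by
          by_contra hC
          exact hBω (h2 ⟨hC, hDω⟩).2
        simp [hind, hBω, hDω, hCω, Set.mem_inter_iff]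
      · simp [hind, hBω, hDω, Set.mem_inter_iff]
  · intro h
    constructor
    · rintro ω ⟨hAω, hBω⟩
      have := h ω
      rw [hsup, hinf] at this
      have hnot : ω ∉ Bᶜ ∩ D := fun h' => h'.1 hBω
      simp only [hind, if_pos hBω, if_pos hAω, if_neg hnot] at this
      by_cases hDω : ω ∈ D <;> by_cases hCω : ω ∈ C <;>
        simp [hDω, hCω] at this ⊢ <;> linarith
    · rintro ω ⟨hCω, hDω⟩
      rw [Set.mem_compl_iff] at hCω
      have := h ω
      rw [hsup, hinf] at this
      have hBω : ω ∈ B := by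
        by_contra hB'
        simp [hind, hB', hDω, hCω, Set.mem_inter_iff] at this
        linarith
      refine ⟨?_, hBω⟩
      intro hAω
      have hnot : ω ∉ Bᶜ ∩ D := fun h' => h'.1 hBω
      simp [hind, hBω, hAω, hnot, hDω, hCω] at this
      linarith
end

section
/- Let 𝒫 be a partition of Ω and let C|D be a conditional event with C ∩ D ≠ ∅ and Cᶜ ∩ D ≠ ∅. Then the inner conditional event (C|D)_* = (C∩D)_* | ((C∩D)_* ∪ (Cᶜ∩D)^*) is a well-defined element of 𝒜_C(𝒫) (its conditioning event is nonempty), it satisfies (C|D)_* ≤_GN C|D, and for every A|B ∈ 𝒜_C(𝒫) with A|B ≤_GN C|D one has A|B ≤_GN (C|D)_*. In other words, the set m(C|D) = {A|B ∈ 𝒜_C(𝒫) : A|B ≤_GN C|D} is nonempty and has (C|D)_* as its maximum with respect to ≤_GN. -/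
open Set

lemma atom_unique {Ω : Type*} {pt : Set (Set Ω)} (hpt : IsPartition pt)
    {e f : Set Ω} (he : e ∈ pt) (hf : f ∈ pt) {ω : Ω} (hωe : ω ∈ e) (hωf : ω ∈ f) :
    e = f := by
  by_contra h
  have := hpt.2.1 e he f hf h
  exact absurd (Set.mem_inter hωe hωf) (by simp [this])

lemma atom_cover {Ω : Type*} {pt : Set (Set Ω)} (hpt : IsPartition pt) (ω : Ω) :
    ∃ e ∈ pt, ω ∈ e := by
  have : ω ∈ ⋃₀ pt := by rw [hpt.2.2]; trivial
  exact this

lemma memA_atom_sub {Ω : Type*} {pt : Set (Set Ω)} (hpt : IsPartition pt)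
    {E e : Set Ω} (hE : memA pt E) (he : e ∈ pt) {ω : Ω} (hωe : ω ∈ e) (hωE : ω ∈ E) :
    e ⊆ E := by
  obtain ⟨T, hT, rfl⟩ := hE
  obtain ⟨f, hf, hωf⟩ := hωE
  have := atom_unique hpt he (hT hf) hωe hωf
  exact this ▸ fun x hx => ⟨f, hf, hx⟩

/-- The inner conditional event `(C|D)_*` is a well-defined element of
`𝒜_C(pt)`, satisfies `(C|D)_* ≤GN C|D`, and is the maximum of
`m(C|D) = {A|B ∈ 𝒜_C(pt) : A|B ≤GN C|D}` w.r.t. `≤GN`. -/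
theorem stmt_4 {Ω : Type*} [Nonempty Ω] (pt : Set (Set Ω)) (hpt : IsPartition pt)
    (C D : Set Ω) (h1 : (C ∩ D).Nonempty) (h2 : (Cᶜ ∩ D).Nonempty) :
    (innerE pt (C ∩ D) ∪ outerE pt (Cᶜ ∩ D)).Nonempty ∧
    memA pt (innerE pt (C ∩ D)) ∧
    memA pt (innerE pt (C ∩ D) ∪ outerE pt (Cᶜ ∩ D)) ∧
    GNe (innerE pt (C ∩ D)) (innerE pt (C ∩ D) ∪ outerE pt (Cᶜ ∩ D)) C D ∧
    (∀ A B : Set Ω, memA pt A → memA pt B → B.Nonempty → GNe A B C D →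
      GNe A B (innerE pt (C ∩ D)) (innerE pt (C ∩ D) ∪ outerE pt (Cᶜ ∩ D))) := by
  set I := innerE pt (C ∩ D) with hI
  set O := outerE pt (Cᶜ ∩ D) with hO
  have hIsub : I ⊆ C ∩ D := fun ω ⟨e, ⟨_, heC⟩, hωe⟩ => heC hωe
  have hOsup : Cᶜ ∩ D ⊆ O := by
    intro ω hω
    obtain ⟨e, he, hωe⟩ := atom_cover hpt ω
    exact ⟨e, ⟨he, ⟨ω, hωe, hω⟩⟩, hωe⟩
  have hOnon : O.Nonempty := h2.mono hOsup
  refine ⟨hOnon.mono subset_union_right, ?_, ?_, ?_, ?_⟩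
  · exact ⟨{e ∈ pt | e ⊆ C ∩ D}, fun e he => he.1, rfl⟩
  · refine ⟨{e ∈ pt | e ⊆ C ∩ D} ∪ {e ∈ pt | (e ∩ (Cᶜ ∩ D)).Nonempty},
      fun e he => he.elim (fun h => h.1) (fun h => h.1), ?_⟩
    rw [Set.sUnion_union]; rfl
  · constructor
    · intro ω hω
      exact hIsub hω.1
    · intro ω hω
      exact ⟨fun hωI => absurd (hIsub hωI).1 hω.1, Or.inr (hOsup hω)⟩
  · intro A B hA hB hBne hGN
    obtain ⟨hAB, hCD⟩ := hGN
    constructor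
    · intro ω hω
      obtain ⟨e, he, hωe⟩ := atom_cover hpt ω
      have heA := memA_atom_sub hpt hA he hωe hω.1
      have heB := memA_atom_sub hpt hB he hωe hω.2
      have hsub : e ⊆ C ∩ D := fun x hx => hAB ⟨heA hx, heB hx⟩
      have hωI : ω ∈ I := ⟨e, ⟨he, hsub⟩, hωe⟩
      exact ⟨hωI, Or.inl hωI⟩
    · rintro ω ⟨hωIc, hωIO⟩
      have hωO : ω ∈ O := hωIO.resolve_left hωIc
      obtain ⟨e, ⟨he, x, hxe, hxCD⟩, hωe⟩ := hωO
      have hx : x ∈ Aᶜ ∩ B := hCD hxCD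
      have heB := memA_atom_sub hpt hB he hxe hx.2
      exact ⟨fun hωA => hx.1 (memA_atom_sub hpt hA he hωe hωA hxe), heB hωe⟩
end

section
/- Let μ̲ be a C-convex lower prevision on a set S of conditional gambles, and let X|D be a conditional gamble not in S. Suppose μ′ and μ″ are two C-convex lower previsions on S ∪ {X|D} that agree with μ̲ on S and satisfy μ′(X|D) = m and μ″(X|D) = M with m < M. Then for every t ∈ [m, M], the map ν on S ∪ {X|D} that agrees with μ̲ on S and has ν(X|D) = t is a C-convex lower prevision. -/
open Set

lemma sup_nonneg_mono {Ω : Type*} (B : Set Ω) (f g : Ω → ℝ)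
    (hfg : ∀ ω ∈ B, f ω ≤ g ω) (h : 0 ≤ sSup (f '' B)) : 0 ≤ sSup (g '' B) := by
  rcases B.eq_empty_or_nonempty with hB | hB
  · simp [hB]
  · by_cases hbdd : BddAbove (g '' B)
    · refine h.trans (csSup_le (hB.image f) ?_)
      rintro x ⟨ω, hω, rfl⟩
      exact (hfg ω hω).trans (le_csSup hbdd ⟨ω, hω, rfl⟩)
    · rw [Real.sSup_of_not_bddAbove hbdd]

lemma gainTerm_diff {Ω : Type*} (P Q : (Ω → ℝ) × Set Ω → ℝ) (Y : Ω → ℝ) (B : Set Ω) (ω : Ω) :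
    gainTerm P Y B ω = gainTerm Q Y B ω + (Q (Y, B) - P (Y, B)) * ind B ω := by
  unfold gainTerm ind
  by_cases h : ω ∈ B
  · simp [Set.indicator_of_mem h]
  · simp [Set.indicator_of_notMem h]

/-- Intermediate-value lemma for C-convex extensions: if two C-convex extensions
of a C-convex lower prevision assign values `m < M` to an additional conditional gamble `X|D`,
then any extension assigning a value `t ∈ [m, M]` is C-convex. -/
theorem stmt_6 {Ω : Type*} [Nonempty Ω] (S : Set ((Ω → ℝ) × Set Ω))
    (hS : IsCondGambleSet S)
    (μ μ' μ'' ν : (Ω → ℝ) × Set Ω → ℝ) (X : Ω → ℝ) (D : Set Ω)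
    (hD : D.Nonempty) (hX : Bdd X) (hnot : (X, D) ∉ S)
    (hμ : IsCConvexLP S μ)
    (hμ' : IsCConvexLP (S ∪ {(X, D)}) μ') (hμ'ag : ∀ p ∈ S, μ' p = μ p)
    (hμ'' : IsCConvexLP (S ∪ {(X, D)}) μ'') (hμ''ag : ∀ p ∈ S, μ'' p = μ p)
    (m M : ℝ) (hm : μ' (X, D) = m) (hM : μ'' (X, D) = M) (hmM : m < M)
    (t : ℝ) (ht : t ∈ Set.Icc m M)
    (hνag : ∀ p ∈ S, ν p = μ p) (hνt : ν (X, D) = t) :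
    IsCConvexLP (S ∪ {(X, D)}) ν := by
  classical
  constructor
  · -- convexity
    intro n hn X0 B0 Xs Bs s0 s h0mem hmem hs hsum hs0
    set a : ℝ := (if (X0, B0) = (X, D) then s0 else 0) -
        ∑ i, (if (Xs i, Bs i) = (X, D) then s i else 0) with ha_def
    -- key pointwise formula for any extension P agreeing with μ on S
    have key : ∀ (P : (Ω → ℝ) × Set Ω → ℝ), (∀ p ∈ S, P p = μ p) → ∀ ω,
        ((∑ i, s i * gainTerm ν (Xs i) (Bs i) ω) - s0 * gainTerm ν X0 B0 ω) =
        ((∑ i, s i * gainTerm P (Xs i) (Bs i) ω) - s0 * gainTerm P X0 B0 ω) +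
          (t - P (X, D)) * ind D ω * a := by
      intro P hP ω
      have hterm : ∀ (Y : Ω → ℝ) (B : Set Ω) (c : ℝ), (Y, B) ∈ S ∪ {(X, D)} →
          c * gainTerm ν Y B ω = c * gainTerm P Y B ω +
            (if (Y, B) = (X, D) then c else 0) * ((P (X, D) - t) * ind D ω) := by
        intro Y B c hYB
        rcases hYB with h | h
        · have hne : (Y, B) ≠ (X, D) := by
            intro hcontra; rw [hcontra] at h; exact hnot h
          rw [gainTerm_diff ν P Y B ω, hνag _ h, hP _ h, if_neg hne]
          ring
        · have h' : (Y, B) = (X, D) := h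
          rw [Prod.mk.injEq] at h'
          obtain ⟨rfl, rfl⟩ := h'
          rw [if_pos rfl, gainTerm_diff ν P Y B ω, hνt]
          ring
      have hsumterm : ∀ i, s i * gainTerm ν (Xs i) (Bs i) ω =
          s i * gainTerm P (Xs i) (Bs i) ω +
            (if (Xs i, Bs i) = (X, D) then s i else 0) * ((P (X, D) - t) * ind D ω) :=
        fun i => hterm (Xs i) (Bs i) (s i) (hmem i)
      rw [Finset.sum_congr rfl (fun i _ => hsumterm i), Finset.sum_add_distrib,
        hterm X0 B0 s0 h0mem, ← Finset.sum_mul, ha_def]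
      ring
    have hindD : ∀ ω : Ω, 0 ≤ ind D ω :=
      fun ω => Set.indicator_nonneg (fun _ _ => zero_le_one) ω
    rcases le_or_gt 0 a with ha | ha
    · -- use μ'
      have h' := hμ'.1 n hn X0 B0 Xs Bs s0 s h0mem hmem hs hsum hs0
      refine sup_nonneg_mono _ _ _ (fun ω _ => ?_) h'
      rw [key μ' hμ'ag ω, hm]
      have : 0 ≤ (t - m) * ind D ω * a :=
        mul_nonneg (mul_nonneg (by linarith [ht.1]) (hindD ω)) ha
      linarith
    · -- use μ''
      have h'' := hμ''.1 n hn X0 B0 Xs Bs s0 s h0mem hmem hs hsum hs0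
      refine sup_nonneg_mono _ _ _ (fun ω _ => ?_) h''
      rw [key μ'' hμ''ag ω, hM]
      have h1 : (t - M) * ind D ω ≤ 0 :=
        mul_nonpos_of_nonpos_of_nonneg (by linarith [ht.2]) (hindD ω)
      have h2 := mul_nonneg (neg_nonneg.mpr h1) (neg_nonneg.mpr ha.le)
      rw [neg_mul_neg] at h2
      linarith
  · -- centering
    intro Y B hYB
    rcases hYB with h | h
    · obtain ⟨h1, h2⟩ := hμ.2 Y B h
      exact ⟨Or.inl h1, by rw [hνag _ h1, h2]⟩
    · have h' : (Y, B) = (X, D) := h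
      rw [Prod.mk.injEq] at h'
      obtain ⟨rfl, rfl⟩ := h'
      obtain ⟨h1, h2⟩ := hμ'.2 Y B (Or.inr rfl)
      refine ⟨h1, ?_⟩
      rcases h1 with hz | hz
      · rw [hνag _ hz, ← hμ'ag _ hz, h2]
      · exfalso
        have hz' : ((fun _ => (0 : ℝ)), B) = (Y, B) := hz
        obtain ⟨h3, h4⟩ := hμ''.2 Y B (Or.inr rfl)
        rw [hz'] at h2
        rw [hz'] at h4
        rw [hm] at h2
        rw [hM] at h4
        linarith
end

section
/- Let 𝒫 be a partition of Ω, let P̲ be a W-coherent lower probability on 𝒜_C(𝒫), and let ℰ be an arbitrary set of conditional events disjoint from 𝒜_C(𝒫) such that every C|D ∈ ℰ satisfies C ∩ D ≠ ∅ and Cᶜ ∩ D ≠ ∅. Then the extension of P̲ to 𝒜_C(𝒫) ∪ ℰ defined by P̲(C|D) = P̲((C|D)_*) for all C|D ∈ ℰ (the lower GN-extension) is a W-coherent lower probability. -/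
open Set

-- ### helper lemmas


section Helpers

variable {Ω : Type*}

lemma ind_of_mem {A : Set Ω} {x : Ω} (h : x ∈ A) : ind A x = 1 := by
  simp [ind, Set.indicator_of_mem h]

lemma ind_of_not_mem {A : Set Ω} {x : Ω} (h : x ∉ A) : ind A x = 0 := by
  simp [ind, Set.indicator_of_notMem h]

lemma ind_nonneg (A : Set Ω) (x : Ω) : 0 ≤ ind A x := by
  by_cases h : x ∈ A
  · rw [ind_of_mem h]; norm_num
  · rw [ind_of_not_mem h]

lemma ind_le_one (A : Set Ω) (x : Ω) : ind A x ≤ 1 := by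
  by_cases h : x ∈ A
  · rw [ind_of_mem h]
  · rw [ind_of_not_mem h]; norm_num

lemma setOf1_ind (A : Set Ω) : {ω | ind A ω = 1} = A := by
  ext x
  by_cases h : x ∈ A <;> simp [h, ind_of_mem, ind_of_not_mem]

lemma gainTerm_of_mem (P : (Ω → ℝ) × Set Ω → ℝ) {X : Ω → ℝ} {B : Set Ω} {x : Ω}
    (h : x ∈ B) : gainTerm P X B x = X x - P (X, B) := by
  simp [gainTerm, Set.indicator_of_mem h]

lemma gainTerm_of_notMem (P : (Ω → ℝ) × Set Ω → ℝ) {X : Ω → ℝ} {B : Set Ω} {x : Ω}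
    (h : x ∉ B) : gainTerm P X B x = 0 := by
  simp [gainTerm, Set.indicator_of_notMem h]

lemma abs_gainTerm_le (P : (Ω → ℝ) × Set Ω → ℝ) (A B : Set Ω) (x : Ω) :
    |gainTerm P (ind A) B x| ≤ 1 + |P (ind A, B)| := by
  by_cases h : x ∈ B
  · rw [gainTerm_of_mem P h]
    calc |ind A x - P (ind A, B)| ≤ |ind A x| + |P (ind A, B)| := abs_sub _ _
      _ ≤ 1 + |P (ind A, B)| := by
          have h1 := ind_nonneg A x
          have h2 := ind_le_one A x
          have : |ind A x| ≤ 1 := by rw [abs_of_nonneg h1]; exact h2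
          linarith
  · rw [gainTerm_of_notMem P h]
    have : (0:ℝ) ≤ |P (ind A, B)| := abs_nonneg _
    simp only [abs_zero]
    linarith

-- partition lemmas
variable {pt : Set (Set Ω)}

lemma exists_atom (hpt : IsPartition pt) (x : Ω) : ∃ e ∈ pt, x ∈ e := by
  have h := hpt.2.2
  have : x ∈ ⋃₀ pt := by rw [h]; trivial
  exact this

lemma atom_eq (hpt : IsPartition pt) {e f : Set Ω} (he : e ∈ pt) (hf : f ∈ pt) {x : Ω}
    (hx : x ∈ e) (hx' : x ∈ f) : e = f := by
  by_contra hne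
  have := hpt.2.1 e he f hf hne
  exact absurd (show x ∈ e ∩ f from ⟨hx, hx'⟩) (by rw [this]; exact notMem_empty x)

lemma memA_atom_subset (hpt : IsPartition pt) {S e : Set Ω} (hS : memA pt S) (he : e ∈ pt)
    {x : Ω} (hx : x ∈ e) (hxS : x ∈ S) : e ⊆ S := by
  obtain ⟨T, hT, rfl⟩ := hS
  obtain ⟨f, hfT, hxf⟩ := hxS
  have : e = f := atom_eq hpt he (hT hfT) hx hxf
  subst this
  exact subset_sUnion_of_mem hfT

lemma memA_congr (hpt : IsPartition pt) {S e : Set Ω} (hS : memA pt S) (he : e ∈ pt)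
    {x y : Ω} (hx : x ∈ e) (hy : y ∈ e) : x ∈ S ↔ y ∈ S := by
  constructor
  · intro h; exact memA_atom_subset hpt hS he hx h hy
  · intro h; exact memA_atom_subset hpt hS he hy h hx

lemma memA_innerE (S : Set Ω) : memA pt (innerE pt S) :=
  ⟨{e ∈ pt | e ⊆ S}, fun _ h => h.1, rfl⟩

lemma memA_outerE (S : Set Ω) : memA pt (outerE pt S) :=
  ⟨{e ∈ pt | (e ∩ S).Nonempty}, fun _ h => h.1, rfl⟩

lemma memA_union {S T : Set Ω} (hS : memA pt S) (hT : memA pt T) : memA pt (S ∪ T) := by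
  obtain ⟨T1, h1, rfl⟩ := hS
  obtain ⟨T2, h2, rfl⟩ := hT
  exact ⟨T1 ∪ T2, union_subset h1 h2, (Set.sUnion_union T1 T2).symm⟩

lemma innerE_subset (S : Set Ω) : innerE pt S ⊆ S :=
  sUnion_subset fun _ h => h.2

lemma subset_outerE (hpt : IsPartition pt) (S : Set Ω) : S ⊆ outerE pt S := by
  intro x hx
  obtain ⟨e, he, hxe⟩ := exists_atom hpt x
  exact ⟨e, ⟨he, ⟨x, hxe, hx⟩⟩, hxe⟩

lemma atom_subset_innerE {e S : Set Ω} (he : e ∈ pt) (h : e ⊆ S) : e ⊆ innerE pt S :=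
  subset_sUnion_of_mem ⟨he, h⟩

lemma atom_subset_outerE_meets (hpt : IsPartition pt) {e S : Set Ω} (he : e ∈ pt)
    (h : (e ∩ outerE pt S).Nonempty) : (e ∩ S).Nonempty := by
  obtain ⟨x, hxe, f, ⟨hf, hfS⟩, hxf⟩ := h
  have : e = f := atom_eq hpt he hf hxe hxf
  subst this
  exact hfS

-- sSup lemmas
lemma exists_near_sSup {S : Set ℝ} (hne : S.Nonempty) (h : 0 ≤ sSup S) {ε : ℝ} (hε : 0 < ε) :
    ∃ y ∈ S, -ε < y := by
  by_contra hc
  push_neg at hc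
  have : sSup S ≤ -ε := csSup_le hne fun y hy => hc y hy
  linarith

lemma sSup_nonneg_of_near {S : Set ℝ} (hbdd : BddAbove S)
    (h : ∀ ε : ℝ, 0 < ε → ∃ y ∈ S, -ε ≤ y) : 0 ≤ sSup S := by
  by_contra hc
  push_neg at hc
  obtain ⟨y, hy, hy2⟩ := h (-(sSup S) / 2) (by linarith)
  have := le_csSup hbdd hy
  linarith

-- W-coherence basic bounds
lemma wcoh_nonneg {S : Set ((Ω → ℝ) × Set Ω)} {P : (Ω → ℝ) × Set Ω → ℝ}
    (hP : IsWCoherent S P) {A B : Set Ω} (h : (ind A, B) ∈ S) (hB : B.Nonempty) :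
    0 ≤ P (ind A, B) := by
  have hc := hP 0 (ind A) B (fun i => i.elim0) (fun i => i.elim0) 1 (fun i => i.elim0)
    h (fun i => i.elim0) (by norm_num) (fun i => i.elim0)
  simp only [Finset.univ_eq_empty, Finset.sum_empty, Set.iUnion_of_empty, Set.union_empty,
    zero_sub, one_mul] at hc
  have hne : ((fun ω => -gainTerm P (ind A) B ω) '' B).Nonempty := hB.image _
  have hle : sSup ((fun ω => -gainTerm P (ind A) B ω) '' B) ≤ P (ind A, B) := by
    apply csSup_le hne
    rintro y ⟨x, hx, rfl⟩
    simp only []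
    rw [gainTerm_of_mem P hx]
    have := ind_nonneg A x
    linarith
  linarith

lemma wcoh_le_one {S : Set ((Ω → ℝ) × Set Ω)} {P : (Ω → ℝ) × Set Ω → ℝ}
    (hP : IsWCoherent S P) {A B : Set Ω} (h : (ind A, B) ∈ S) (hB : B.Nonempty) :
    P (ind A, B) ≤ 1 := by
  have hc := hP 1 (ind A) B (fun _ => ind A) (fun _ => B) 0 (fun _ => 1)
    h (fun _ => h) le_rfl (fun _ => by norm_num)
  simp only [Fin.sum_univ_one, one_mul, zero_mul, sub_zero, Set.iUnion_const,
    Set.union_self] at hc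
  have hne : ((fun ω => gainTerm P (ind A) B ω) '' B).Nonempty := hB.image _
  have hle : sSup ((fun ω => gainTerm P (ind A) B ω) '' B) ≤ 1 - P (ind A, B) := by
    apply csSup_le hne
    rintro y ⟨x, hx, rfl⟩
    simp only []
    rw [gainTerm_of_mem P hx]
    have := ind_le_one A x
    linarith
  linarith

-- the GN pointwise inequality
lemma gn_pointwise (hpt : IsPartition pt) {C D : Set Ω} {μ : ℝ} (hμ0 : 0 ≤ μ) (hμ1 : μ ≤ 1)
    (x : Ω) :
    (innerE pt (C ∩ D) ∪ outerE pt (Cᶜ ∩ D)).indicator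
        (fun ω => ind (innerE pt (C ∩ D)) ω - μ) x
      ≤ D.indicator (fun ω => ind C ω - μ) x := by
  set A := innerE pt (C ∩ D)
  set M := outerE pt (Cᶜ ∩ D)
  by_cases hA : x ∈ A
  · have hxCD : x ∈ C ∩ D := innerE_subset _ hA
    rw [Set.indicator_of_mem (Set.mem_union_left _ hA), Set.indicator_of_mem hxCD.2,
      ind_of_mem hA, ind_of_mem hxCD.1]
  · by_cases hM : x ∈ M
    · rw [Set.indicator_of_mem (Set.mem_union_right _ hM), ind_of_not_mem hA]
      by_cases hD : x ∈ D
      · rw [Set.indicator_of_mem hD]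
        have := ind_nonneg C x
        linarith
      · rw [Set.indicator_of_notMem hD]
        linarith
    · have hnot : x ∉ A ∪ M := by
        intro h
        rcases h with h | h
        · exact hA h
        · exact hM h
      rw [Set.indicator_of_notMem hnot]
      by_cases hD : x ∈ D
      · rw [Set.indicator_of_mem hD]
        by_cases hC : x ∈ C
        · rw [ind_of_mem hC]; linarith
        · exact absurd (subset_outerE hpt (Cᶜ ∩ D) (show x ∈ Cᶜ ∩ D from ⟨hC, hD⟩)) hM
      · rw [Set.indicator_of_notMem hD]

-- constancy of AC gain terms on atoms
lemma gainTerm_const_on_atom (hpt : IsPartition pt) (P : (Ω → ℝ) × Set Ω → ℝ)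
    {A B e : Set Ω} (hA : memA pt A) (hB : memA pt B) (he : e ∈ pt) {x y : Ω}
    (hx : x ∈ e) (hy : y ∈ e) :
    gainTerm P (ind A) B x = gainTerm P (ind A) B y := by
  by_cases hxB : x ∈ B
  · have hyB : y ∈ B := (memA_congr hpt hB he hx hy).1 hxB
    rw [gainTerm_of_mem P hxB, gainTerm_of_mem P hyB]
    by_cases hxA : x ∈ A
    · rw [ind_of_mem hxA, ind_of_mem ((memA_congr hpt hA he hx hy).1 hxA)]
    · rw [ind_of_not_mem hxA, ind_of_not_mem (fun h => hxA ((memA_congr hpt hA he hx hy).2 h))]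
  · rw [gainTerm_of_notMem P hxB,
      gainTerm_of_notMem P (fun h => hxB ((memA_congr hpt hB he hx hy).2 h))]

end Helpers


/-- The lower GN-extension of a W-coherent lower probability on `𝒜_C(pt)` to an
arbitrary set `E` of additional conditional events, given by `C|D ↦ P((C|D)_*)`, is
W-coherent. -/
theorem stmt_9 {Ω : Type*} [Nonempty Ω] (pt : Set (Set Ω)) (hpt : IsPartition pt)
    (P ν : (Ω → ℝ) × Set Ω → ℝ)
    (hP : IsWCoherent (AC pt) P)
    (E : Set (Set Ω × Set Ω))
    (hE : ∀ q ∈ E, (q.1 ∩ q.2).Nonempty ∧ (q.1ᶜ ∩ q.2).Nonempty)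
    (hdisj : ∀ q ∈ E, (ind q.1, q.2) ∉ AC pt)
    (hag : ∀ p ∈ AC pt, ν p = P p)
    (hext : ∀ q ∈ E, ν (ind q.1, q.2) = P (innerCE pt q.1 q.2)) :
    IsWCoherent (AC pt ∪ (fun q : Set Ω × Set Ω => (ind q.1, q.2)) '' E) ν := by
  classical
  intro n X0 B0 X Bs s0 s hmem0 hmemi hs0 hsi
  -- extract canonical representations
  have hrep : ∀ i : Fin n, ∃ A : Set Ω, X i = ind A ∧ (Bs i).Nonempty ∧
      ((memA pt A ∧ memA pt (Bs i)) ∨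
       ((ind A, Bs i) ∉ AC pt ∧ (A ∩ Bs i).Nonempty ∧ (Aᶜ ∩ Bs i).Nonempty ∧
         ν (ind A, Bs i) = P (innerCE pt A (Bs i)))) := by
    intro i
    rcases hmemi i with h | ⟨q, hqE, heq⟩
    · obtain ⟨A, B, hA, hB, hBne, heq⟩ := h
      have h1 : X i = ind A := congrArg Prod.fst heq
      have h2 : Bs i = B := congrArg Prod.snd heq
      exact ⟨A, h1, h2 ▸ hBne, Or.inl ⟨hA, h2 ▸ hB⟩⟩
    · have h1 : ind q.1 = X i := congrArg Prod.fst heq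
      have h2 : q.2 = Bs i := congrArg Prod.snd heq
      obtain ⟨hne1, hne2⟩ := hE q hqE
      have hdq := hdisj q hqE
      have hxq := hext q hqE
      rw [h2] at hne1 hne2 hdq hxq
      exact ⟨q.1, h1.symm, ⟨hne1.choose, hne1.choose_spec.2⟩,
        Or.inr ⟨hdq, hne1, hne2, hxq⟩⟩
  choose Aof hXeq hBne hdico using hrep
  have hrep0 : ∃ A : Set Ω, X0 = ind A ∧ B0.Nonempty ∧
      ((memA pt A ∧ memA pt B0) ∨
       ((ind A, B0) ∉ AC pt ∧ (A ∩ B0).Nonempty ∧ (Aᶜ ∩ B0).Nonempty ∧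
         ν (ind A, B0) = P (innerCE pt A B0))) := by
    rcases hmem0 with h | ⟨q, hqE, heq⟩
    · obtain ⟨A, B, hA, hB, hBne, heq⟩ := h
      have h1 : X0 = ind A := congrArg Prod.fst heq
      have h2 : B0 = B := congrArg Prod.snd heq
      exact ⟨A, h1, h2 ▸ hBne, Or.inl ⟨hA, h2 ▸ hB⟩⟩
    · have h1 : ind q.1 = X0 := congrArg Prod.fst heq
      have h2 : q.2 = B0 := congrArg Prod.snd heq
      obtain ⟨hne1, hne2⟩ := hE q hqE
      have hdq := hdisj q hqE
      have hxq := hext q hqE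
      rw [h2] at hne1 hne2 hdq hxq
      exact ⟨q.1, h1.symm, ⟨hne1.choose, hne1.choose_spec.2⟩,
        Or.inr ⟨hdq, hne1, hne2, hxq⟩⟩
  obtain ⟨A0, hX0eq, hB0ne, hdico0⟩ := hrep0
  -- rewrite the goal in terms of indicators
  simp only [hX0eq, hXeq]
  set U : Set Ω := B0 ∪ ⋃ i, Bs i with hU
  have hUne : U.Nonempty := hB0ne.mono Set.subset_union_left
  have hUB0 : B0 ⊆ U := Set.subset_union_left
  have hUBs : ∀ i, Bs i ⊆ U := fun i => le_trans (Set.subset_iUnion Bs i) Set.subset_union_right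
  -- exclusivity helpers
  have hexcl : ∀ i : Fin n, (memA pt (Aof i) ∧ memA pt (Bs i)) →
      ¬ ((ind (Aof i), Bs i) ∉ AC pt ∧ (Aof i ∩ Bs i).Nonempty ∧ ((Aof i)ᶜ ∩ Bs i).Nonempty ∧
        ν (ind (Aof i), Bs i) = P (innerCE pt (Aof i) (Bs i))) := by
    intro i hla hr
    exact hr.1 ⟨Aof i, Bs i, hla.1, hla.2, hBne i, rfl⟩
  have hEfact : ∀ i : Fin n, ¬ (memA pt (Aof i) ∧ memA pt (Bs i)) →
      ((Aof i ∩ Bs i).Nonempty ∧ ((Aof i)ᶜ ∩ Bs i).Nonempty ∧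
        ν (ind (Aof i), Bs i) = P (innerCE pt (Aof i) (Bs i))) := by
    intro i hla
    rcases hdico i with h | h
    · exact absurd h hla
    · exact ⟨h.2.1, h.2.2⟩
  -- the replacement for the subtracted conditional event
  have hsub : ∃ sA0 sB0 : Set Ω, memA pt sA0 ∧ memA pt sB0 ∧ sB0.Nonempty ∧
      ν (ind A0, B0) = P (ind sA0, sB0) ∧
      (∀ e ∈ pt, (e ∩ sB0).Nonempty →
        ∃ x', (x' ∈ e ∧ x' ∈ U) ∧ gainTerm ν (ind A0) B0 x' ≤ gainTerm P (ind sA0) sB0 x') ∧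
      (∀ e ∈ pt, e ∩ sB0 = ∅ → (e ∩ U).Nonempty →
        (∃ x', (x' ∈ e ∧ x' ∈ U) ∧ gainTerm ν (ind A0) B0 x' ≤ 0) ∨
        (∀ S' : Set Ω, memA pt S' → S' ⊆ U → e ∩ S' = ∅)) := by
    by_cases h0ac : memA pt A0 ∧ memA pt B0
    · have hmagP : ν (ind A0, B0) = P (ind A0, B0) :=
        hag _ ⟨A0, B0, h0ac.1, h0ac.2, hB0ne, rfl⟩
      refine ⟨A0, B0, h0ac.1, h0ac.2, hB0ne, hmagP, ?_, ?_⟩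
      · intro e he hmeet
        obtain ⟨z, hze, hzB⟩ := hmeet
        have hsubB : e ⊆ B0 := memA_atom_subset hpt h0ac.2 he hze hzB
        obtain ⟨w, hwe⟩ := hpt.1 e he
        refine ⟨w, ⟨hwe, hUB0 (hsubB hwe)⟩, ?_⟩
        by_cases hwB : w ∈ B0
        · rw [gainTerm_of_mem ν hwB, gainTerm_of_mem P hwB, hmagP]
        · rw [gainTerm_of_notMem ν hwB, gainTerm_of_notMem P hwB]
      · intro e he hdisjB heU
        left
        obtain ⟨w, hwe, hwU⟩ := heU
        refine ⟨w, ⟨hwe, hwU⟩, ?_⟩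
        have hwB : w ∉ B0 := fun h => (eq_empty_iff_forall_notMem.mp hdisjB w ⟨hwe, h⟩)
        rw [gainTerm_of_notMem ν hwB]
    · obtain ⟨hd0, hne1, hne2, hnu⟩ := hdico0.resolve_left h0ac
      have hmu0P : ν (ind A0, B0) =
          P (ind (innerE pt (A0 ∩ B0)),
            innerE pt (A0 ∩ B0) ∪ outerE pt (A0ᶜ ∩ B0)) := by
        rw [hnu]; rfl
      refine ⟨innerE pt (A0 ∩ B0), innerE pt (A0 ∩ B0) ∪ outerE pt (A0ᶜ ∩ B0),
        memA_innerE _, memA_union (memA_innerE _) (memA_outerE _), ?_, hmu0P, ?_, ?_⟩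
      · obtain ⟨z, hz⟩ := hne2
        exact ⟨z, Set.mem_union_right _ (subset_outerE hpt _ hz)⟩
      · intro e he hmeet
        by_cases hA : (e ∩ innerE pt (A0 ∩ B0)).Nonempty
        · obtain ⟨z, hze, hzA⟩ := hA
          have hesub : e ⊆ innerE pt (A0 ∩ B0) :=
            memA_atom_subset hpt (memA_innerE _) he hze hzA
          obtain ⟨w, hwe⟩ := hpt.1 e he
          have hwA : w ∈ innerE pt (A0 ∩ B0) := hesub hwe
          have hwAB : w ∈ A0 ∩ B0 := innerE_subset _ hwA
          refine ⟨w, ⟨hwe, hUB0 hwAB.2⟩, ?_⟩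
          rw [gainTerm_of_mem ν hwAB.2, gainTerm_of_mem P (Set.mem_union_left _ hwA),
            ind_of_mem hwAB.1, ind_of_mem hwA, hmu0P]
        · obtain ⟨z, hze, hzB⟩ := hmeet
          have hzM : z ∈ outerE pt (A0ᶜ ∩ B0) := by
            rcases hzB with h | h
            · exact absurd ⟨z, hze, h⟩ hA
            · exact h
          obtain ⟨w, hwe, hwM⟩ := atom_subset_outerE_meets hpt he ⟨z, hze, hzM⟩
          have hwA0 : w ∉ A0 := hwM.1
          have hwB0 : w ∈ B0 := hwM.2
          have hwnA : w ∉ innerE pt (A0 ∩ B0) := fun h => hwA0 (innerE_subset _ h).1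
          refine ⟨w, ⟨hwe, hUB0 hwB0⟩, ?_⟩
          rw [gainTerm_of_mem ν hwB0,
            gainTerm_of_mem P (Set.mem_union_right _ (subset_outerE hpt _ hwM)),
            ind_of_not_mem hwA0, ind_of_not_mem hwnA, hmu0P]
      · intro e he hdisjB heU
        by_cases hex : ∃ x', (x' ∈ e ∧ x' ∈ U) ∧ x' ∉ A0 ∩ B0
        · obtain ⟨x', ⟨hx'e, hx'U⟩, hx'n⟩ := hex
          left
          refine ⟨x', ⟨hx'e, hx'U⟩, ?_⟩
          by_cases hB : x' ∈ B0
          · exfalso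
            have hA0 : x' ∉ A0 := fun h => hx'n ⟨h, hB⟩
            have hx'M : x' ∈ innerE pt (A0 ∩ B0) ∪ outerE pt (A0ᶜ ∩ B0) :=
              Set.mem_union_right _
                (subset_outerE hpt (A0ᶜ ∩ B0) (show x' ∈ A0ᶜ ∩ B0 from ⟨hA0, hB⟩))
            exact eq_empty_iff_forall_notMem.mp hdisjB x' ⟨hx'e, hx'M⟩
          · rw [gainTerm_of_notMem ν hB]
        · right
          push_neg at hex
          intro S' hS' hS'U
          by_contra hne
          rw [← ne_eq, ← nonempty_iff_ne_empty] at hne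
          obtain ⟨z, hze, hzS⟩ := hne
          have hesub : e ⊆ S' := memA_atom_subset hpt hS' he hze hzS
          have hesubA : e ⊆ A0 ∩ B0 := fun w hw => hex w ⟨hw, hS'U (hesub hw)⟩
          have hesubI : e ⊆ innerE pt (A0 ∩ B0) := atom_subset_innerE he hesubA
          obtain ⟨w, hwe⟩ := hpt.1 e he
          exact eq_empty_iff_forall_notMem.mp hdisjB w
            ⟨hwe, Set.mem_union_left _ (hesubI hwe)⟩
  obtain ⟨sA0, sB0, hsA0m, hsB0m, hsB0ne, hmu0P, hI3, hI4⟩ := hsub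
  have hsubACmem : (ind sA0, sB0) ∈ AC pt := ⟨sA0, sB0, hsA0m, hsB0m, hsB0ne, rfl⟩
  -- the positive constant c
  set kv : Fin n → ℝ := fun i => if ¬(memA pt (Aof i) ∧ memA pt (Bs i)) ∧
      0 < s i * ν (ind (Aof i), Bs i) then s i * ν (ind (Aof i), Bs i) else 1 with hkv
  have hFsne : (insert (1:ℝ) (Finset.image kv Finset.univ)).Nonempty :=
    ⟨1, Finset.mem_insert_self 1 _⟩
  set c : ℝ := Finset.min' _ hFsne with hcdef
  have hkvpos : ∀ i : Fin n, 0 < kv i := by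
    intro i
    rw [hkv]
    by_cases hcond : ¬(memA pt (Aof i) ∧ memA pt (Bs i)) ∧ 0 < s i * ν (ind (Aof i), Bs i)
    · simp only [if_pos hcond]; exact hcond.2
    · simp only [if_neg hcond]; norm_num
  have hcpos : 0 < c := by
    have hm := Finset.min'_mem _ hFsne
    rw [← hcdef] at hm
    rcases Finset.mem_insert.mp hm with h | h
    · rw [h]; norm_num
    · obtain ⟨i, _, hki⟩ := Finset.mem_image.mp h
      rw [← hki]; exact hkvpos i
  have hcle : ∀ i : Fin n, ¬(memA pt (Aof i) ∧ memA pt (Bs i)) →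
      0 < s i * ν (ind (Aof i), Bs i) → c ≤ s i * ν (ind (Aof i), Bs i) := by
    intro i h1 h2
    have hmem : kv i ∈ insert (1:ℝ) (Finset.image kv Finset.univ) :=
      Finset.mem_insert_of_mem (Finset.mem_image_of_mem _ (Finset.mem_univ i))
    have hle := Finset.min'_le _ _ hmem
    rw [← hcdef] at hle
    rw [hkv] at hle
    simp only at hle
    rw [if_pos (And.intro h1 h2)] at hle
    exact hle
  -- the per-index replacement package
  have hper : ∀ i : Fin n, ∃ (Ah Bh : Set Ω) (ti : ℝ),
      memA pt Ah ∧ memA pt Bh ∧ (ind Ah, Bh) ∈ AC pt ∧ 0 ≤ ti ∧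
      (∀ y, ti * gainTerm P (ind Ah) Bh y ≤ s i * gainTerm ν (ind (Aof i)) (Bs i) y) ∧
      (∀ e ∈ pt, (e ∩ Bh).Nonempty → (e ∩ sB0).Nonempty ∨ (e ∩ U).Nonempty) ∧
      (∀ (x : Ω) (e : Set Ω), e ∈ pt → x ∈ e →
        (∀ S' : Set Ω, memA pt S' → S' ⊆ U → e ∩ S' = ∅) → e ∩ sB0 = ∅ →
        ti * gainTerm P (ind Ah) Bh x ≤ 0 ∧
          (x ∈ Bh → ti * gainTerm P (ind Ah) Bh x ≤ -c)) := by
    intro i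
    by_cases hla : memA pt (Aof i) ∧ memA pt (Bs i)
    · have hACmemi : (ind (Aof i), Bs i) ∈ AC pt := ⟨Aof i, Bs i, hla.1, hla.2, hBne i, rfl⟩
      have hagP : ν (ind (Aof i), Bs i) = P (ind (Aof i), Bs i) := hag _ hACmemi
      refine ⟨Aof i, Bs i, s i, hla.1, hla.2, hACmemi, hsi i, ?_, ?_, ?_⟩
      · intro y
        have heq : gainTerm ν (ind (Aof i)) (Bs i) y = gainTerm P (ind (Aof i)) (Bs i) y := by
          by_cases hy : y ∈ Bs i
          · rw [gainTerm_of_mem ν hy, gainTerm_of_mem P hy, hagP]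
          · rw [gainTerm_of_notMem ν hy, gainTerm_of_notMem P hy]
        rw [heq]
      · intro e he hmeet
        right
        obtain ⟨z, hze, hzB⟩ := hmeet
        exact ⟨z, hze, hUBs i hzB⟩
      · intro x e he hxe hbad hdB
        have hdisjBs : e ∩ Bs i = ∅ := hbad (Bs i) hla.2 (hUBs i)
        have hxB : x ∉ Bs i := fun h => eq_empty_iff_forall_notMem.mp hdisjBs x ⟨hxe, h⟩
        constructor
        · rw [gainTerm_of_notMem P hxB, mul_zero]
        · intro h; exact absurd h hxB
    · obtain ⟨hne1, hne2, hnu⟩ := hEfact i hla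
      have hInne : (innerE pt (Aof i ∩ Bs i) ∪ outerE pt ((Aof i)ᶜ ∩ Bs i)).Nonempty := by
        obtain ⟨z, hz⟩ := hne2
        exact ⟨z, Set.mem_union_right _ (subset_outerE hpt _ hz)⟩
      have hmemACi : (ind (innerE pt (Aof i ∩ Bs i)),
          innerE pt (Aof i ∩ Bs i) ∪ outerE pt ((Aof i)ᶜ ∩ Bs i)) ∈ AC pt :=
        ⟨innerE pt (Aof i ∩ Bs i), innerE pt (Aof i ∩ Bs i) ∪ outerE pt ((Aof i)ᶜ ∩ Bs i),
          memA_innerE _, memA_union (memA_innerE _) (memA_outerE _), hInne, rfl⟩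
      have hmuP : ν (ind (Aof i), Bs i) = P (ind (innerE pt (Aof i ∩ Bs i)),
          innerE pt (Aof i ∩ Bs i) ∪ outerE pt ((Aof i)ᶜ ∩ Bs i)) := by
        rw [hnu]; rfl
      have hm0 : 0 ≤ ν (ind (Aof i), Bs i) := by
        rw [hmuP]; exact wcoh_nonneg hP hmemACi hInne
      have hm1 : ν (ind (Aof i), Bs i) ≤ 1 := by
        rw [hmuP]; exact wcoh_le_one hP hmemACi hInne
      by_cases hk : 0 < s i * ν (ind (Aof i), Bs i)
      · refine ⟨innerE pt (Aof i ∩ Bs i),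
          innerE pt (Aof i ∩ Bs i) ∪ outerE pt ((Aof i)ᶜ ∩ Bs i), s i,
          memA_innerE _, memA_union (memA_innerE _) (memA_outerE _), hmemACi, hsi i,
          ?_, ?_, ?_⟩
        · intro y
          apply mul_le_mul_of_nonneg_left _ (hsi i)
          have hrw : gainTerm P (ind (innerE pt (Aof i ∩ Bs i)))
              (innerE pt (Aof i ∩ Bs i) ∪ outerE pt ((Aof i)ᶜ ∩ Bs i)) =
              (innerE pt (Aof i ∩ Bs i) ∪ outerE pt ((Aof i)ᶜ ∩ Bs i)).indicator
                (fun ω => ind (innerE pt (Aof i ∩ Bs i)) ω - ν (ind (Aof i), Bs i)) := by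
            rw [hmuP]; rfl
          rw [hrw]
          exact gn_pointwise hpt hm0 hm1 y
        · intro e he hmeet
          right
          obtain ⟨z, hze, hzB⟩ := hmeet
          rcases hzB with h | h
          · have := innerE_subset _ (h : z ∈ innerE pt (Aof i ∩ Bs i))
            exact ⟨z, hze, hUBs i this.2⟩
          · obtain ⟨w, hwe, hwM⟩ := atom_subset_outerE_meets hpt he ⟨z, hze, h⟩
            exact ⟨w, hwe, hUBs i hwM.2⟩
        · intro x e he hxe hbad hdB
          have hAiU : innerE pt (Aof i ∩ Bs i) ⊆ U := fun w hw => hUBs i (innerE_subset _ hw).2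
          have hdisjAi : e ∩ innerE pt (Aof i ∩ Bs i) = ∅ := hbad _ (memA_innerE _) hAiU
          have hxAi : x ∉ innerE pt (Aof i ∩ Bs i) := fun h =>
            eq_empty_iff_forall_notMem.mp hdisjAi x ⟨hxe, h⟩
          constructor
          · by_cases hxB : x ∈ innerE pt (Aof i ∩ Bs i) ∪ outerE pt ((Aof i)ᶜ ∩ Bs i)
            · rw [gainTerm_of_mem P hxB, ind_of_not_mem hxAi]
              have hval : (0:ℝ) - P (ind (innerE pt (Aof i ∩ Bs i)),
                  innerE pt (Aof i ∩ Bs i) ∪ outerE pt ((Aof i)ᶜ ∩ Bs i)) ≤ 0 := by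
                rw [← hmuP]; linarith
              have := mul_le_mul_of_nonneg_left hval (hsi i)
              rw [mul_zero] at this
              exact this
            · rw [gainTerm_of_notMem P hxB, mul_zero]
          · intro hxB
            rw [gainTerm_of_mem P hxB, ind_of_not_mem hxAi]
            have h1 : c ≤ s i * ν (ind (Aof i), Bs i) := hcle i hla hk
            rw [← hmuP]
            have : s i * (0 - ν (ind (Aof i), Bs i)) = -(s i * ν (ind (Aof i), Bs i)) := by ring
            rw [this]
            linarith
      · refine ⟨sA0, sB0, 0, hsA0m, hsB0m, hsubACmem, le_rfl, ?_, ?_, ?_⟩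
        · intro y
          rw [zero_mul]
          have hprod : s i * ν (ind (Aof i), Bs i) = 0 :=
            le_antisymm (not_lt.mp hk) (mul_nonneg (hsi i) hm0)
          rcases mul_eq_zero.mp hprod with h | h
          · rw [h, zero_mul]
          · apply mul_nonneg (hsi i)
            by_cases hy : y ∈ Bs i
            · rw [gainTerm_of_mem ν hy, h, sub_zero]
              exact ind_nonneg _ _
            · rw [gainTerm_of_notMem ν hy]
        · intro e he hmeet
          left; exact hmeet
        · intro x e he hxe hbad hdB
          constructor
          · rw [zero_mul]
          · intro hxB
            exact absurd (show x ∈ e ∩ sB0 from ⟨hxe, hxB⟩)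
              (by rw [hdB]; exact Set.notMem_empty x)
  choose Ah Bh ti hAhm hBhm hACm hti hK2 hK3 hK45 using hper
  -- boundedness of the gain over U
  have hbdd : BddAbove ((fun ω => (∑ i, s i * gainTerm ν (ind (Aof i)) (Bs i) ω) -
      s0 * gainTerm ν (ind A0) B0 ω) '' U) := by
    refine ⟨(∑ i, s i * (1 + |ν (ind (Aof i), Bs i)|)) + s0 * (1 + |ν (ind A0, B0)|), ?_⟩
    rintro y ⟨x, hx, rfl⟩
    have h1 : ∀ i ∈ Finset.univ, s i * gainTerm ν (ind (Aof i)) (Bs i) x ≤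
        s i * (1 + |ν (ind (Aof i), Bs i)|) := by
      intro i _
      exact mul_le_mul_of_nonneg_left
        (le_trans (le_abs_self _) (abs_gainTerm_le ν (Aof i) (Bs i) x)) (hsi i)
    have h2 : -(s0 * gainTerm ν (ind A0) B0 x) ≤ s0 * (1 + |ν (ind A0, B0)|) := by
      have h3 := mul_le_mul_of_nonneg_left
        (le_trans (neg_le_abs _) (abs_gainTerm_le ν A0 B0 x)) hs0
      rw [mul_neg] at h3
      exact h3
    have hsumle := Finset.sum_le_sum h1
    show (∑ i, s i * gainTerm ν (ind (Aof i)) (Bs i) x) - s0 * gainTerm ν (ind A0) B0 x ≤ _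
    linarith
  apply sSup_nonneg_of_near hbdd
  intro ε hε
  have hεpos : 0 < min ε c := lt_min hε hcpos
  have hcoh := hP n (ind sA0) sB0 (fun i => ind (Ah i)) Bh s0 ti hsubACmem hACm hs0 hti
  have himgne : ((fun ω => (∑ i, ti i * gainTerm P (ind (Ah i)) (Bh i) ω) -
      s0 * gainTerm P (ind sA0) sB0 ω) '' (sB0 ∪ ⋃ i, Bh i)).Nonempty :=
    (hsB0ne.mono Set.subset_union_left).image _
  obtain ⟨yv, hyvmem, hygt⟩ := exists_near_sSup himgne hcoh hεpos
  obtain ⟨x, hxV, rfl⟩ := hyvmem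
  have hygt' : -(min ε c) < (∑ i, ti i * gainTerm P (ind (Ah i)) (Bh i) x) -
      s0 * gainTerm P (ind sA0) sB0 x := hygt
  obtain ⟨e, he, hxe⟩ := exists_atom hpt x
  have hconst : ∀ z, z ∈ e →
      ((∑ i, ti i * gainTerm P (ind (Ah i)) (Bh i) z) - s0 * gainTerm P (ind sA0) sB0 z) =
      ((∑ i, ti i * gainTerm P (ind (Ah i)) (Bh i) x) - s0 * gainTerm P (ind sA0) sB0 x) := by
    intro z hz
    rw [gainTerm_const_on_atom hpt P hsA0m hsB0m he hz hxe]
    congr 1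
    exact Finset.sum_congr rfl fun i _ => by
      rw [gainTerm_const_on_atom hpt P (hAhm i) (hBhm i) he hz hxe]
  have hfinal : ∀ x', x' ∈ e → x' ∈ U →
      gainTerm ν (ind A0) B0 x' ≤ gainTerm P (ind sA0) sB0 x' →
      ∃ y ∈ ((fun ω => (∑ i, s i * gainTerm ν (ind (Aof i)) (Bs i) ω) -
        s0 * gainTerm ν (ind A0) B0 ω) '' U), -ε ≤ y := by
    intro x' hx'e hx'U hcmp
    refine ⟨_, ⟨x', hx'U, rfl⟩, ?_⟩
    show -ε ≤ (∑ i, s i * gainTerm ν (ind (Aof i)) (Bs i) x') -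
      s0 * gainTerm ν (ind A0) B0 x'
    have hsum : (∑ i, ti i * gainTerm P (ind (Ah i)) (Bh i) x') ≤
        ∑ i, s i * gainTerm ν (ind (Aof i)) (Bs i) x' :=
      Finset.sum_le_sum fun i _ => hK2 i x'
    have hsub2 : s0 * gainTerm ν (ind A0) B0 x' ≤ s0 * gainTerm P (ind sA0) sB0 x' :=
      mul_le_mul_of_nonneg_left hcmp hs0
    have heq := hconst x' hx'e
    have hεle : min ε c ≤ ε := min_le_left _ _
    linarith
  by_cases hmeet : (e ∩ sB0).Nonempty
  · obtain ⟨x', ⟨hx'e, hx'U⟩, hcmp⟩ := hI3 e he hmeet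
    exact hfinal x' hx'e hx'U hcmp
  · have hdB : e ∩ sB0 = ∅ := Set.not_nonempty_iff_eq_empty.mp hmeet
    have hxnB : x ∉ sB0 := fun h => hmeet ⟨x, hxe, h⟩
    have hxiU : x ∈ ⋃ i, Bh i := by
      rcases hxV with h | h
      · exact absurd h hxnB
      · exact h
    obtain ⟨i0, hxB⟩ := Set.mem_iUnion.mp hxiU
    have heU : (e ∩ U).Nonempty := (hK3 i0 e he ⟨x, hxe, hxB⟩).resolve_left hmeet
    rcases hI4 e he hdB heU with ⟨x', ⟨hx'e, hx'U⟩, hle0⟩ | hbad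
    · have hx'nB : x' ∉ sB0 := fun h => hmeet ⟨x', hx'e, h⟩
      have hcmp : gainTerm ν (ind A0) B0 x' ≤ gainTerm P (ind sA0) sB0 x' := by
        rw [gainTerm_of_notMem P hx'nB]; exact hle0
      exact hfinal x' hx'e hx'U hcmp
    · exfalso
      have h0 : gainTerm P (ind sA0) sB0 x = 0 := gainTerm_of_notMem P hxnB
      have hterm0 : ti i0 * gainTerm P (ind (Ah i0)) (Bh i0) x ≤ -c :=
        (hK45 i0 x e he hxe hbad hdB).2 hxB
      have hsum : (∑ i, ti i * gainTerm P (ind (Ah i)) (Bh i) x) ≤ -c := by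
        have hle : ∀ i ∈ Finset.univ, ti i * gainTerm P (ind (Ah i)) (Bh i) x ≤
            (if i = i0 then -c else (0:ℝ)) := by
          intro i _
          by_cases h : i = i0
          · subst h; rw [if_pos rfl]; exact hterm0
          · rw [if_neg h]; exact (hK45 i x e he hxe hbad hdB).1
        calc (∑ i, ti i * gainTerm P (ind (Ah i)) (Bh i) x) ≤
            ∑ i, (if i = i0 then -c else (0:ℝ)) := Finset.sum_le_sum hle
          _ = -c := by simp
      have hεc : min ε c ≤ c := min_le_right _ _
      rw [h0, mul_zero, sub_zero] at hygt'
      linarith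
end
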